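/- Let U = ⋃_{n∈ℕ} (closure(B_{2ⁿ+1}) \ B_{2ⁿ−1}) ⊆ ℝ^N be the union of the closed annuli of inner radius 2ⁿ−1 and outer radius 2ⁿ+1 centered at the origin. Then for every e ∈ S^{N-1} and n ∈ ℕ, dist(3·2ⁿ e, U) = 2ⁿ − 1; consequently B(U) = ∅ and U(U) = ∅. -/

import Mathlib

/-!
A point `x` lies in `U` iff `‖x‖` is within `1` of some power of two, and `|‖x‖ - ‖y‖| ≤ ‖x - y‖`,
so the distance from `3·2ⁿ e` to `U` is governed by the gaps between consecutive powers of two: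
the nearest annulus is the one around `2ⁿ⁺¹`, at distance `2ⁿ - 1`. Along `τ = 2ⁿ` the ratio
`dist(τξ, U)/τ` vanishes, while along `τ = 3·2ⁿ` it equals `(2ⁿ - 1)/(3·2ⁿ) ≥ 1/6`, so it has
liminf `0` but no limit.
-/

open Filter Metric Topology

/-- The union of the closed annuli of inner radius `2ⁿ−1` and outer radius `2ⁿ+1`
centered at the origin. -/
def annuliUnion (N : ℕ) : Set (EuclideanSpace ℝ (Fin N)) :=
  ⋃ n : ℕ, Metric.closedBall (0 : EuclideanSpace ℝ (Fin N)) (2 ^ n + 1) \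
    Metric.ball (0 : EuclideanSpace ℝ (Fin N)) (2 ^ n - 1)

lemma mem_annuliUnion_iff {N : ℕ} {x : EuclideanSpace ℝ (Fin N)} :
    x ∈ annuliUnion N ↔ ∃ m : ℕ, |‖x‖ - 2 ^ m| ≤ 1 := by
  simp only [annuliUnion, Set.mem_iUnion, Set.mem_sdiff, mem_closedBall, mem_ball,
    dist_zero_right, not_lt, abs_sub_le_iff]
  exact exists_congr fun m => ⟨fun ⟨h₁, h₂⟩ => ⟨by linarith, by linarith⟩,
    fun ⟨h₁, h₂⟩ => ⟨by linarith, by linarith⟩⟩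

lemma smul_mem_annuliUnion_of_abs_sub_two_pow_le {N : ℕ} {e : EuclideanSpace ℝ (Fin N)}
    (he : ‖e‖ = 1) {t : ℝ} (ht : 0 ≤ t) {m : ℕ} (htm : |t - 2 ^ m| ≤ 1) :
    t • e ∈ annuliUnion N :=
  mem_annuliUnion_iff.2 ⟨m, by rwa [norm_smul_of_nonneg ht, he, mul_one]⟩

lemma two_pow_le_abs_three_mul_two_pow_sub_two_pow (n m : ℕ) :
    (2 : ℝ) ^ n ≤ |3 * 2 ^ n - 2 ^ m| := by
  rcases le_or_gt m n with hm | hm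
  · have : (2 : ℝ) ^ m ≤ 2 ^ n := pow_le_pow_right₀ one_le_two hm
    exact le_abs.2 (Or.inl (by linarith [pow_pos (two_pos (α := ℝ)) m]))
  obtain rfl | hm := (Nat.succ_le_of_lt hm).eq_or_lt
  · rw [pow_succ]
    exact le_abs.2 (Or.inl (by linarith))
  · have : (2 : ℝ) ^ (n + 2) ≤ 2 ^ m := pow_le_pow_right₀ one_le_two hm
    rw [pow_add] at this
    exact le_abs.2 (Or.inr (by linarith))

lemma infDist_three_mul_two_pow_smul_annuliUnion {N : ℕ} {e : EuclideanSpace ℝ (Fin N)}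
    (he : ‖e‖ = 1) (n : ℕ) :
    infDist ((3 * 2 ^ n : ℝ) • e) (annuliUnion N) = 2 ^ n - 1 := by
  have h2n : (1 : ℝ) ≤ 2 ^ n := one_le_pow₀ one_le_two
  have hnorm : ‖(3 * 2 ^ n : ℝ) • e‖ = 3 * 2 ^ n := by
    rw [norm_smul_of_nonneg (by positivity), he, mul_one]
  have hnearest : ((2 : ℝ) ^ (n + 1) + 1) • e ∈ annuliUnion N :=
    smul_mem_annuliUnion_of_abs_sub_two_pow_le he (by positivity) (m := n + 1) (by simp)
  refine le_antisymm ?_ ((le_infDist ⟨_, hnearest⟩).2 fun y hy => ?_)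
  · calc infDist ((3 * 2 ^ n : ℝ) • e) (annuliUnion N)
        ≤ dist ((3 * 2 ^ n : ℝ) • e) (((2 : ℝ) ^ (n + 1) + 1) • e) :=
          infDist_le_dist_of_mem hnearest
      _ = 2 ^ n - 1 := by
          rw [dist_eq_norm, ← sub_smul, norm_smul, he, mul_one, Real.norm_eq_abs, pow_succ,
            abs_of_nonneg (by linarith)]
          ring
  · obtain ⟨m, hm⟩ := mem_annuliUnion_iff.1 hy
    calc (2 : ℝ) ^ n - 1 ≤ |3 * 2 ^ n - 2 ^ m| - |‖y‖ - 2 ^ m| := by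
          linarith [two_pow_le_abs_three_mul_two_pow_sub_two_pow n m]
      _ ≤ |3 * 2 ^ n - ‖y‖| := by
          simpa only [sub_sub_sub_cancel_right] using
            abs_sub_abs_le_abs_sub (3 * 2 ^ n - 2 ^ m : ℝ) (‖y‖ - 2 ^ m)
      _ = |‖(3 * 2 ^ n : ℝ) • e‖ - ‖y‖| := by rw [hnorm]
      _ ≤ dist ((3 * 2 ^ n : ℝ) • e) y := by
          rw [dist_eq_norm]
          exact abs_norm_sub_norm_le _ _

lemma liminf_infDist_smul_annuliUnion_div_le_zero {N : ℕ} {ξ : EuclideanSpace ℝ (Fin N)}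
    (hξ : ‖ξ‖ = 1) :
    liminf (fun τ : ℝ => infDist (τ • ξ) (annuliUnion N) / τ) atTop ≤ 0 := by
  have hzero : ∃ᶠ τ in atTop, infDist (τ • ξ) (annuliUnion N) / τ ≤ 0 :=
    (tendsto_pow_atTop_atTop_of_one_lt one_lt_two).frequently <| Frequently.of_forall fun n => by
      rw [infDist_zero_of_mem (smul_mem_annuliUnion_of_abs_sub_two_pow_le hξ (by positivity)
        (m := n) (by simp)), zero_div]
  refine liminf_le_of_frequently_le hzero (isBoundedUnder_of_eventually_ge (a := 0) ?_)
  filter_upwards [eventually_ge_atTop 0] with τ hτ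
  exact div_nonneg infDist_nonneg hτ

lemma not_tendsto_infDist_smul_annuliUnion_div_zero {N : ℕ} {ξ : EuclideanSpace ℝ (Fin N)}
    (hξ : ‖ξ‖ = 1) :
    ¬ Tendsto (fun τ : ℝ => infDist (τ • ξ) (annuliUnion N) / τ) atTop (𝓝 0) := by
  intro h
  have hτ : Tendsto (fun n : ℕ => 3 * (2 : ℝ) ^ n) atTop atTop :=
    (tendsto_pow_atTop_atTop_of_one_lt one_lt_two).const_mul_atTop three_pos
  obtain ⟨n, hsmall, hn⟩ := ((h.comp hτ).eventually (gt_mem_nhds (by norm_num : (0 : ℝ) < 1 / 6))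
    |>.and (eventually_ge_atTop 1)).exists
  have h2n : (2 : ℝ) ≤ 2 ^ n := by simpa using pow_le_pow_right₀ one_le_two hn
  rw [Function.comp_apply, infDist_three_mul_two_pow_smul_annuliUnion hξ,
    div_lt_iff₀ (by positivity)] at hsmall
  linarith

theorem annuli_dist_and_directions_general (N : ℕ) :
    (∀ e : EuclideanSpace ℝ (Fin N), ‖e‖ = 1 → ∀ n : ℕ,
      Metric.infDist (((3 * 2 ^ n : ℝ)) • e) (annuliUnion N) = 2 ^ n - 1) ∧
    (∀ ξ : EuclideanSpace ℝ (Fin N), ‖ξ‖ = 1 →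
      ¬ (0 < Filter.liminf
          (fun τ : ℝ => Metric.infDist (τ • ξ) (annuliUnion N) / τ) Filter.atTop)) ∧
    (∀ ξ : EuclideanSpace ℝ (Fin N), ‖ξ‖ = 1 →
      ¬ Filter.Tendsto
          (fun τ : ℝ => Metric.infDist (τ • ξ) (annuliUnion N) / τ)
          Filter.atTop (nhds 0)) :=
  ⟨fun _ he n => infDist_three_mul_two_pow_smul_annuliUnion he n,
    fun _ hξ => (liminf_infDist_smul_annuliUnion_div_le_zero hξ).not_gt,
    fun _ hξ => not_tendsto_infDist_smul_annuliUnion_div_zero hξ⟩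

/-- for `U = ⋃_n (closure(B_{2ⁿ+1}) \ B_{2ⁿ−1})`, one has
`dist(3·2ⁿe, U) = 2ⁿ − 1` for every unit vector `e` and `n ∈ ℕ`; consequently
`B(U) = ∅` and `U(U) = ∅`. -/
theorem annuli_dist_and_directions (N : ℕ) (hN : 1 ≤ N) :
    (∀ e : EuclideanSpace ℝ (Fin N), ‖e‖ = 1 → ∀ n : ℕ,
      Metric.infDist (((3 * 2 ^ n : ℝ)) • e) (annuliUnion N) = 2 ^ n - 1) ∧
    (∀ ξ : EuclideanSpace ℝ (Fin N), ‖ξ‖ = 1 →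
      ¬ (0 < Filter.liminf
          (fun τ : ℝ => Metric.infDist (τ • ξ) (annuliUnion N) / τ) Filter.atTop)) ∧
    (∀ ξ : EuclideanSpace ℝ (Fin N), ‖ξ‖ = 1 →
      ¬ Filter.Tendsto
          (fun τ : ℝ => Metric.infDist (τ • ξ) (annuliUnion N) / τ)
          Filter.atTop (nhds 0)) :=
  annuli_dist_and_directions_general N
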